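/- Consider the closed-loop system η̇ = Dᵀω, Mω̇ = Q⁻¹θ − DΓ(V)sin(η) − Aω − P^l, TV̇ = −E(η)V + Ē_fd, θ̇ = −L_comm·θ − Q⁻¹ω, where L_comm is the (symmetric, positive semidefinite) Laplacian of a connected undirected communication graph on n nodes, Q is diagonal positive definite, and P^l ∈ ℝⁿ is constant. Let (η̄, ω̄, V̄, θ̄) be the equilibrium with ω̄ = 0, θ̄ = (1ₙ1ₙᵀP^l)/(1ₙᵀQ⁻¹1ₙ), 0 = Q⁻¹θ̄ − DΓ(V̄)sin(η̄) − P^l and E(η̄)V̄ = Ē_fd. Then along any differentiable solution the function Z(η, ω, V, θ) = ½ωᵀMω + W₂(η, V) + ½(θ − θ̄)ᵀ(θ − θ̄) satisfies d/dt Z = −ωᵀAω − (E(η)V − Ē_fd)ᵀT⁻¹(E(η)V − Ē_fd) − (θ − θ̄)ᵀL_comm(θ − θ̄) ≤ 0. -/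

import Mathlib

open Matrix Real Filter Topology Set

noncomputable section

/-- `Vec n` is `ℝⁿ`. -/
abbrev Vec (n : ℕ) := Fin n → ℝ

/-- Incidence matrix of the (undirected, arbitrarily oriented) graph whose `m` edges have
endpoints `ep1 k` (positive end) and `ep2 k` (negative end). -/
def incD {n m : ℕ} (ep1 ep2 : Fin m → Fin n) : Matrix (Fin n) (Fin m) ℝ :=
  Matrix.of fun i k => if i = ep1 k then 1 else if i = ep2 k then -1 else 0

/-- `Γ(V) = diag(γ₁,…,γ_m)`, `γ_k = V_i V_j B_{ij}` for edge `k = {i,j}`. -/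
def Gam {n m : ℕ} (ep1 ep2 : Fin m → Fin n) (B : Fin m → ℝ) (V : Vec n) :
    Matrix (Fin m) (Fin m) ℝ :=
  Matrix.diagonal fun k => V (ep1 k) * V (ep2 k) * B k

/-- The matrix `E(η)`. -/
def Emat {n m : ℕ} (ep1 ep2 : Fin m → Fin n) (B : Fin m → ℝ)
    (Bii Xd Xd' : Vec n) (η : Vec m) : Matrix (Fin n) (Fin n) ℝ :=
  Matrix.of fun i j =>
    if i = j then (1 - Bii i * (Xd i - Xd' i)) / (Xd i - Xd' i)
    else -∑ k, (if (ep1 k = i ∧ ep2 k = j) ∨ (ep1 k = j ∧ ep2 k = i)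
      then B k * Real.cos (η k) else 0)

/-- The diagonal matrix `F`. -/
def Fmat {n : ℕ} (Bii Xd Xd' : Vec n) : Matrix (Fin n) (Fin n) ℝ :=
  Matrix.diagonal fun i => (1 - Bii i * (Xd i - Xd' i)) / (Xd i - Xd' i)

/-- componentwise sine -/
def sinv {m : ℕ} (η : Vec m) : Vec m := fun k => Real.sin (η k)
/-- componentwise cosine -/
def cosv {m : ℕ} (η : Vec m) : Vec m := fun k => Real.cos (η k)

/-- The storage function `W₂` with reference point `(ηb, Vb)`. -/
def W2 {n m : ℕ} (ep1 ep2 : Fin m → Fin n) (B : Fin m → ℝ) (Bii Xd Xd' : Vec n)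
    (Efd : Vec n) (ηb : Vec m) (Vb : Vec n) (η : Vec m) (V : Vec n) : ℝ :=
  -((1 : Vec m) ⬝ᵥ (Gam ep1 ep2 B V).mulVec (cosv η))
    + (1 : Vec m) ⬝ᵥ (Gam ep1 ep2 B Vb).mulVec (cosv ηb)
    - ((Gam ep1 ep2 B Vb).mulVec (sinv ηb)) ⬝ᵥ (η - ηb)
    - Efd ⬝ᵥ (V - Vb)
    + (1 / 2) * (V ⬝ᵥ (Fmat Bii Xd Xd').mulVec V)
    - (1 / 2) * (Vb ⬝ᵥ (Fmat Bii Xd Xd').mulVec Vb)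

/-- entrywise absolute value `|D|` of the incidence matrix. -/
def absD {n m : ℕ} (ep1 ep2 : Fin m → Fin n) : Matrix (Fin n) (Fin m) ℝ :=
  Matrix.of fun i k => |incD ep1 ep2 i k|

/-- The matrix `E(η̄) − diag(V̄)⁻¹|D|Γ(V̄)diag(sin η̄)diag(cos η̄)⁻¹diag(sin η̄)|D|ᵀdiag(V̄)⁻¹`
appearing in Assumption 3. -/
def Schur {n m : ℕ} (ep1 ep2 : Fin m → Fin n) (B : Fin m → ℝ) (Bii Xd Xd' : Vec n)
    (ηb : Vec m) (Vb : Vec n) : Matrix (Fin n) (Fin n) ℝ :=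
  Emat ep1 ep2 B Bii Xd Xd' ηb -
    (Matrix.diagonal fun i => (Vb i)⁻¹) * absD ep1 ep2 * Gam ep1 ep2 B Vb *
      Matrix.diagonal (sinv ηb) * (Matrix.diagonal (cosv ηb))⁻¹ *
      Matrix.diagonal (sinv ηb) * (absD ep1 ep2)ᵀ * (Matrix.diagonal fun i => (Vb i)⁻¹)

/-!
The gradient of `W₂` is `(Γ(V) sin η − Γ(V̄) sin η̄, E(η)V − Ē_fd)`: the only
nonobvious part is that `F − E(η)` is the weighted adjacency matrix of the network with weight
`B_k cos η_k` on edge `k`, which is exactly the `V`-gradient of `1ᵀΓ(V) cos η`. Substituting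
`η̇ = Dᵀω` and the dynamics, the line flows `ωᵀDΓ(V) sin η` cancel between the kinetic and the
potential part, the load `Pˡ` cancels against the equilibrium relation
`Pˡ = Q⁻¹θ̄ − DΓ(V̄) sin η̄`, the coupling `ωᵀQ⁻¹θ` cancels against the controller part, and
`L θ̄ = 0` since constants lie in the kernel of a Laplacian. What is left is a sum of three
nonpositive quadratic forms.
-/

theorem Matrix.IsSymm.dotProduct_mulVec_comm {ι R : Type*} [Fintype ι] [CommSemiring R]
    {A : Matrix ι ι R} (hA : A.IsSymm) (x y : ι → R) : x ⬝ᵥ A *ᵥ y = y ⬝ᵥ A *ᵥ x := by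
  rw [dotProduct_mulVec, ← mulVec_transpose, hA.eq, dotProduct_comm]

theorem Matrix.PosSemidef.dotProduct_mulVec_self_nonneg {ι R : Type*} [Fintype ι] [CommRing R]
    [PartialOrder R] [StarRing R] [TrivialStar R] {A : Matrix ι ι R} (hA : A.PosSemidef)
    (x : ι → R) : 0 ≤ x ⬝ᵥ A *ᵥ x := by
  simpa using hA.dotProduct_mulVec_nonneg x

theorem SimpleGraph.lapMatrix_mulVec_const_fun_eq_zero {V R : Type*} [Fintype V] [DecidableEq V]
    [CommRing R] (G : SimpleGraph V) [DecidableRel G.Adj] (a : R) :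
    G.lapMatrix R *ᵥ (fun _ => a) = 0 := by
  rw [show (fun _ => a : V → R) = a • fun _ => 1 from funext fun _ => (mul_one a).symm,
    mulVec_smul, G.lapMatrix_mulVec_const_eq_zero, smul_zero]

section Calculus

variable {𝕜 ι κ : Type*} [NontriviallyNormedField 𝕜] [Fintype ι]
  {x y : 𝕜 → ι → 𝕜} {x' y' : ι → 𝕜} {t : 𝕜}

theorem HasDerivAt.dotProduct (hx : HasDerivAt x x' t) (hy : HasDerivAt y y' t) :
    HasDerivAt (fun s => x s ⬝ᵥ y s) (x' ⬝ᵥ y t + x t ⬝ᵥ y') t := by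
  have h := HasDerivAt.fun_sum (u := Finset.univ) fun i _ =>
    (hasDerivAt_pi.mp hx i).fun_mul (hasDerivAt_pi.mp hy i)
  rwa [Finset.sum_add_distrib] at h

theorem HasDerivAt.const_mulVec (A : Matrix κ ι 𝕜) (hx : HasDerivAt x x' t) :
    HasDerivAt (fun s => A *ᵥ x s) (A *ᵥ x') t :=
  hasDerivAt_pi.mpr fun i => HasDerivAt.fun_sum fun j _ => (hasDerivAt_pi.mp hx j).const_mul (A i j)

theorem HasDerivAt.dotProduct_mulVec_self {A : Matrix ι ι 𝕜} (hA : A.IsSymm)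
    (hx : HasDerivAt x x' t) :
    HasDerivAt (fun s => x s ⬝ᵥ A *ᵥ x s) (2 * (x' ⬝ᵥ A *ᵥ x t)) t :=
  (hx.dotProduct (hx.const_mulVec A)).congr_deriv <| by rw [hA.dotProduct_mulVec_comm (x t)]; ring

end Calculus

section Network

variable {n m : ℕ} (ep1 ep2 : Fin m → Fin n) (B : Fin m → ℝ) (Bii Xd Xd' : Vec n)

theorem Fmat_sub_Emat (hep : ∀ k, ep1 k ≠ ep2 k) (η : Vec m) :
    Fmat Bii Xd Xd' - Emat ep1 ep2 B Bii Xd Xd' η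
      = ∑ k, (B k * Real.cos (η k)) • (single (ep1 k) (ep2 k) 1 + single (ep2 k) (ep1 k) 1) := by
  ext i j
  simp only [Matrix.sub_apply, Fmat, Emat, diagonal_apply, of_apply, Matrix.sum_apply,
    Matrix.smul_apply, Matrix.add_apply, single_apply, smul_eq_mul]
  split_ifs with hij
  · subst hij
    rw [sub_self]
    refine (Finset.sum_eq_zero fun k _ => ?_).symm
    have := hep k
    split_ifs <;> grind
  · rw [zero_sub, neg_neg]
    refine Finset.sum_congr rfl fun k _ => ?_
    have := hep k
    split_ifs <;> grind

theorem dotProduct_Fmat_sub_Emat_mulVec (hep : ∀ k, ep1 k ≠ ep2 k) (η : Vec m) (U V : Vec n) :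
    U ⬝ᵥ (Fmat Bii Xd Xd' - Emat ep1 ep2 B Bii Xd Xd' η) *ᵥ V
      = ∑ k, B k * Real.cos (η k) * (U (ep1 k) * V (ep2 k) + U (ep2 k) * V (ep1 k)) := by
  have dotProduct_update (a : Fin n) (c : ℝ) : U ⬝ᵥ Function.update 0 a c = U a * c :=
    dotProduct_single U c a
  simp only [Fmat_sub_Emat ep1 ep2 B Bii Xd Xd' hep, Matrix.sum_mulVec, dotProduct_sum,
    smul_mulVec, add_mulVec, single_mulVec, dotProduct_smul, dotProduct_add, dotProduct_update,
    one_mul, smul_eq_mul]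

variable {ep1 ep2 B} {η : ℝ → Vec m} {V : ℝ → Vec n} {η' : Vec m} {V' : Vec n} {t : ℝ}

theorem hasDerivAt_one_dotProduct_Gam_mulVec_cosv (hep : ∀ k, ep1 k ≠ ep2 k)
    (hη : HasDerivAt η η' t) (hV : HasDerivAt V V' t) :
    HasDerivAt (fun s => (1 : Vec m) ⬝ᵥ Gam ep1 ep2 B (V s) *ᵥ cosv (η s))
      (V' ⬝ᵥ (Fmat Bii Xd Xd' - Emat ep1 ep2 B Bii Xd Xd' (η t)) *ᵥ V t
        - (Gam ep1 ep2 B (V t) *ᵥ sinv (η t)) ⬝ᵥ η') t := by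
  have hVi i := hasDerivAt_pi.mp hV i
  have h := HasDerivAt.fun_sum (u := Finset.univ) fun k _ =>
    (((hVi (ep1 k)).fun_mul (hVi (ep2 k))).mul_const (B k)).fun_mul (hasDerivAt_pi.mp hη k).cos
  refine h.congr_deriv ?_ |>.congr_of_eventuallyEq (.of_forall fun s => ?_)
  · rw [dotProduct_Fmat_sub_Emat_mulVec ep1 ep2 B Bii Xd Xd' hep]
    simp only [dotProduct, Gam, mulVec_diagonal, sinv, ← Finset.sum_sub_distrib]
    refine Finset.sum_congr rfl fun k _ => ?_
    ring
  · simp [dotProduct, Gam, mulVec_diagonal, cosv]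

theorem hasDerivAt_W2 (hep : ∀ k, ep1 k ≠ ep2 k) (Efd : Vec n) (ηb : Vec m) (Vb : Vec n)
    (hη : HasDerivAt η η' t) (hV : HasDerivAt V V' t) :
    HasDerivAt (fun s => W2 ep1 ep2 B Bii Xd Xd' Efd ηb Vb (η s) (V s))
      ((Gam ep1 ep2 B (V t) *ᵥ sinv (η t) - Gam ep1 ep2 B Vb *ᵥ sinv ηb) ⬝ᵥ η'
        + V' ⬝ᵥ (Emat ep1 ep2 B Bii Xd Xd' (η t) *ᵥ V t - Efd)) t := by
  have hline := hasDerivAt_one_dotProduct_Gam_mulVec_cosv (B := B) Bii Xd Xd' hep hη hV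
  have hangle := (hasDerivAt_const t (Gam ep1 ep2 B Vb *ᵥ sinv ηb)).dotProduct (hη.sub_const ηb)
  have hvoltage := (hasDerivAt_const t Efd).dotProduct (hV.sub_const Vb)
  have hquad := hV.dotProduct_mulVec_self (A := Fmat Bii Xd Xd') (isSymm_diagonal _)
  refine (((((hline.neg.add_const _).sub hangle).sub hvoltage).add
    (hquad.const_mul (1 / 2 : ℝ))).sub_const _).congr_deriv ?_
  simp only [sub_mulVec, dotProduct_sub, sub_dotProduct, zero_dotProduct,
    dotProduct_comm Efd]
  ring

end Network

theorem closed_loop_power_balance {n m : ℕ} (ep1 ep2 : Fin m → Fin n) (B : Fin m → ℝ)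
    (Bii Xd Xd' Md Ad Td : Vec n) (hTd : ∀ i, Td i ≠ 0) (q : Vec n)
    (G : SimpleGraph (Fin n)) [DecidableRel G.Adj] (Efd Pl : Vec n) (ηb : Vec m) (Vb : Vec n)
    (θb : ℝ) (hPl : (0 : Vec n) = (fun i => (q i)⁻¹ * θb)
      - incD ep1 ep2 *ᵥ Gam ep1 ep2 B Vb *ᵥ sinv ηb - Pl)
    (η : Vec m) (ω ω' V V' θ : Vec n)
    (hωdyn : Matrix.diagonal Md *ᵥ ω' = (Matrix.diagonal fun i => (q i)⁻¹) *ᵥ θ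
      - incD ep1 ep2 *ᵥ Gam ep1 ep2 B V *ᵥ sinv η - Matrix.diagonal Ad *ᵥ ω - Pl)
    (hVdyn : Matrix.diagonal Td *ᵥ V' = -(Emat ep1 ep2 B Bii Xd Xd' η *ᵥ V) + Efd) :
    ω' ⬝ᵥ Matrix.diagonal Md *ᵥ ω
        + (Gam ep1 ep2 B V *ᵥ sinv η - Gam ep1 ep2 B Vb *ᵥ sinv ηb) ⬝ᵥ (incD ep1 ep2)ᵀ *ᵥ ω
        + V' ⬝ᵥ (Emat ep1 ep2 B Bii Xd Xd' η *ᵥ V - Efd)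
        + (θ - fun _ => θb) ⬝ᵥ (-(G.lapMatrix ℝ *ᵥ θ) - (Matrix.diagonal fun i => (q i)⁻¹) *ᵥ ω)
      = -(ω ⬝ᵥ Matrix.diagonal Ad *ᵥ ω)
        - (Emat ep1 ep2 B Bii Xd Xd' η *ᵥ V - Efd) ⬝ᵥ
            (Matrix.diagonal fun i => (Td i)⁻¹) *ᵥ (Emat ep1 ep2 B Bii Xd Xd' η *ᵥ V - Efd)
        - (θ - fun _ => θb) ⬝ᵥ G.lapMatrix ℝ *ᵥ (θ - fun _ => θb) := by
  set Qi : Matrix (Fin n) (Fin n) ℝ := Matrix.diagonal fun i => (q i)⁻¹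
  set J := Emat ep1 ep2 B Bii Xd Xd' η *ᵥ V - Efd
  have hQi : Qi.IsSymm := isSymm_diagonal _
  have hinertia : ω' ⬝ᵥ Matrix.diagonal Md *ᵥ ω = ω ⬝ᵥ Qi *ᵥ θ
      - ω ⬝ᵥ incD ep1 ep2 *ᵥ Gam ep1 ep2 B V *ᵥ sinv η
      - ω ⬝ᵥ Matrix.diagonal Ad *ᵥ ω - ω ⬝ᵥ Pl := by
    rw [(isSymm_diagonal Md).dotProduct_mulVec_comm, hωdyn]
    simp only [dotProduct_sub]
  have hflow (x : Vec m) : x ⬝ᵥ (incD ep1 ep2)ᵀ *ᵥ ω = ω ⬝ᵥ incD ep1 ep2 *ᵥ x := by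
    rw [mulVec_transpose, dotProduct_comm, dotProduct_mulVec]
  have hexciter : V' ⬝ᵥ J = -(J ⬝ᵥ (Matrix.diagonal fun i => (Td i)⁻¹) *ᵥ J) := by
    have hV' : V' = -((Matrix.diagonal fun i => (Td i)⁻¹) *ᵥ J) := by
      rw [← mulVec_neg, neg_sub, sub_eq_neg_add, ← hVdyn, mulVec_mulVec, diagonal_mul_diagonal]
      simp [hTd]
    rw [hV', dotProduct_comm, dotProduct_neg]
  have hload : ω ⬝ᵥ Pl
      = (fun _ => θb) ⬝ᵥ Qi *ᵥ ω - ω ⬝ᵥ incD ep1 ep2 *ᵥ Gam ep1 ep2 B Vb *ᵥ sinv ηb := by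
    have hQc : (fun i => (q i)⁻¹ * θb) = Qi *ᵥ fun _ => θb := by
      ext i
      exact (mulVec_diagonal (fun j => (q j)⁻¹) (fun _ => θb) i).symm
    rw [hQc, eq_comm, sub_eq_zero] at hPl
    rw [← hPl, dotProduct_sub, hQi.dotProduct_mulVec_comm ω]
  have hcontrol : (θ - fun _ => θb) ⬝ᵥ (-(G.lapMatrix ℝ *ᵥ θ) - Qi *ᵥ ω)
      = -((θ - fun _ => θb) ⬝ᵥ G.lapMatrix ℝ *ᵥ (θ - fun _ => θb)) - ω ⬝ᵥ Qi *ᵥ θ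
        + (fun _ => θb) ⬝ᵥ Qi *ᵥ ω := by
    rw [mulVec_sub, G.lapMatrix_mulVec_const_fun_eq_zero, sub_zero, hQi.dotProduct_mulVec_comm ω]
    simp only [dotProduct_sub, sub_dotProduct, dotProduct_neg]
    ring
  rw [hflow, mulVec_sub, dotProduct_sub]
  linear_combination hinertia + hexciter + hcontrol - hload

theorem closed_loop_dissipation_general
    {n m : ℕ} (ep1 ep2 : Fin m → Fin n) (hep : ∀ k, ep1 k ≠ ep2 k)
    (B : Fin m → ℝ)
    (Bii Xd Xd' : Vec n)
    (Md Ad Td : Vec n) (hA : ∀ i, 0 < Ad i) (hT : ∀ i, 0 < Td i)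
    (q : Vec n)
    (G : SimpleGraph (Fin n)) [DecidableRel G.Adj]
    (Efd Pl : Vec n)
    (ηb : Vec m) (Vb : Vec n)
    (heq2 : (0 : Vec n) = (fun i => (q i)⁻¹ * ((∑ j, Pl j) / (∑ j, (q j)⁻¹)))
      - (incD ep1 ep2).mulVec ((Gam ep1 ep2 B Vb).mulVec (sinv ηb)) - Pl)
    (η : ℝ → Vec m) (ω ω' V V' θ : ℝ → Vec n)
    (hη : ∀ t, HasDerivAt η ((incD ep1 ep2)ᵀ.mulVec (ω t)) t)
    (hω : ∀ t, HasDerivAt ω (ω' t) t)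
    (hωdyn : ∀ t, (Matrix.diagonal Md).mulVec (ω' t)
      = (Matrix.diagonal fun i => (q i)⁻¹).mulVec (θ t)
        - (incD ep1 ep2).mulVec ((Gam ep1 ep2 B (V t)).mulVec (sinv (η t)))
        - (Matrix.diagonal Ad).mulVec (ω t) - Pl)
    (hV : ∀ t, HasDerivAt V (V' t) t)
    (hVdyn : ∀ t, (Matrix.diagonal Td).mulVec (V' t)
      = -(Emat ep1 ep2 B Bii Xd Xd' (η t)).mulVec (V t) + Efd)
    (hθ : ∀ t, HasDerivAt θ
      (-(G.lapMatrix ℝ).mulVec (θ t)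
        - (Matrix.diagonal fun i => (q i)⁻¹).mulVec (ω t)) t) :
    ∀ t,
      HasDerivAt
        (fun s => (1 / 2) * (ω s ⬝ᵥ (Matrix.diagonal Md).mulVec (ω s))
          + W2 ep1 ep2 B Bii Xd Xd' Efd ηb Vb (η s) (V s)
          + (1 / 2) * ((θ s - fun _ => (∑ j, Pl j) / (∑ j, (q j)⁻¹))
              ⬝ᵥ (θ s - fun _ => (∑ j, Pl j) / (∑ j, (q j)⁻¹))))
        (-(ω t ⬝ᵥ (Matrix.diagonal Ad).mulVec (ω t))
          - (((Emat ep1 ep2 B Bii Xd Xd' (η t)).mulVec (V t) - Efd) ⬝ᵥ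
              (Matrix.diagonal fun i => (Td i)⁻¹).mulVec
                ((Emat ep1 ep2 B Bii Xd Xd' (η t)).mulVec (V t) - Efd))
          - ((θ t - fun _ => (∑ j, Pl j) / (∑ j, (q j)⁻¹))
              ⬝ᵥ (G.lapMatrix ℝ).mulVec
                (θ t - fun _ => (∑ j, Pl j) / (∑ j, (q j)⁻¹)))) t ∧
      (-(ω t ⬝ᵥ (Matrix.diagonal Ad).mulVec (ω t))
          - (((Emat ep1 ep2 B Bii Xd Xd' (η t)).mulVec (V t) - Efd) ⬝ᵥ
              (Matrix.diagonal fun i => (Td i)⁻¹).mulVec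
                ((Emat ep1 ep2 B Bii Xd Xd' (η t)).mulVec (V t) - Efd))
          - ((θ t - fun _ => (∑ j, Pl j) / (∑ j, (q j)⁻¹))
              ⬝ᵥ (G.lapMatrix ℝ).mulVec
                (θ t - fun _ => (∑ j, Pl j) / (∑ j, (q j)⁻¹)))) ≤ 0 := by
  intro t
  set c : Vec n := fun _ => (∑ j, Pl j) / (∑ j, (q j)⁻¹)
  have hZ := ((((hω t).dotProduct_mulVec_self (isSymm_diagonal Md)).const_mul (1 / 2 : ℝ)).add
    (hasDerivAt_W2 (B := B) Bii Xd Xd' hep Efd ηb Vb (hη t) (hV t))).add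
    ((((hθ t).sub_const c).dotProduct ((hθ t).sub_const c)).const_mul (1 / 2 : ℝ))
  have hbalance := closed_loop_power_balance ep1 ep2 B Bii Xd Xd' Md Ad Td (fun i => (hT i).ne')
    q G Efd Pl ηb Vb _ heq2 (η t) (ω t) (ω' t) (V t) (V' t) (θ t) (hωdyn t) (hVdyn t)
  have hA_nonneg :=
    (posSemidef_diagonal_iff.2 fun i => (hA i).le).dotProduct_mulVec_self_nonneg (ω t)
  have hT_inv_nonneg i : 0 ≤ (Td i)⁻¹ := (inv_pos.2 (hT i)).le
  have hT_nonneg := (posSemidef_diagonal_iff.2 hT_inv_nonneg).dotProduct_mulVec_self_nonneg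
    (Emat ep1 ep2 B Bii Xd Xd' (η t) *ᵥ V t - Efd)
  have hL_nonneg := (G.posSemidef_lapMatrix ℝ).dotProduct_mulVec_self_nonneg (θ t - c)
  refine ⟨hZ.congr_deriv ?_, by linarith⟩
  rw [dotProduct_comm _ (θ t - c)]
  linarith

/-- dissipation identity for the closed loop with the distributed integral
controller `θ̇ = −L_comm θ − Q⁻¹ω`, `u = Q⁻¹θ`: along solutions,
`Ż = −ωᵀAω − ‖E(η)V − Ē_fd‖²_{T⁻¹} − (θ − θ̄)ᵀL_comm(θ − θ̄) ≤ 0`. -/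
theorem closed_loop_dissipation
    {n m : ℕ} (ep1 ep2 : Fin m → Fin n) (hep : ∀ k, ep1 k ≠ ep2 k)
    (B : Fin m → ℝ) (hB : ∀ k, 0 < B k)
    (Bii Xd Xd' : Vec n)
    (Md Ad Td : Vec n) (hM : ∀ i, 0 < Md i) (hA : ∀ i, 0 < Ad i) (hT : ∀ i, 0 < Td i)
    (q : Vec n) (hq : ∀ i, 0 < q i)
    (G : SimpleGraph (Fin n)) [DecidableRel G.Adj] (hG : G.Connected)
    (Efd Pl : Vec n)
    (ηb : Vec m) (Vb : Vec n)
    (heq2 : (0 : Vec n) = (fun i => (q i)⁻¹ * ((∑ j, Pl j) / (∑ j, (q j)⁻¹)))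
      - (incD ep1 ep2).mulVec ((Gam ep1 ep2 B Vb).mulVec (sinv ηb)) - Pl)
    (heq3 : (Emat ep1 ep2 B Bii Xd Xd' ηb).mulVec Vb = Efd)
    (η : ℝ → Vec m) (ω ω' V V' θ : ℝ → Vec n)
    (hη : ∀ t, HasDerivAt η ((incD ep1 ep2)ᵀ.mulVec (ω t)) t)
    (hω : ∀ t, HasDerivAt ω (ω' t) t)
    (hωdyn : ∀ t, (Matrix.diagonal Md).mulVec (ω' t)
      = (Matrix.diagonal fun i => (q i)⁻¹).mulVec (θ t)
        - (incD ep1 ep2).mulVec ((Gam ep1 ep2 B (V t)).mulVec (sinv (η t)))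
        - (Matrix.diagonal Ad).mulVec (ω t) - Pl)
    (hV : ∀ t, HasDerivAt V (V' t) t)
    (hVdyn : ∀ t, (Matrix.diagonal Td).mulVec (V' t)
      = -(Emat ep1 ep2 B Bii Xd Xd' (η t)).mulVec (V t) + Efd)
    (hθ : ∀ t, HasDerivAt θ
      (-(G.lapMatrix ℝ).mulVec (θ t)
        - (Matrix.diagonal fun i => (q i)⁻¹).mulVec (ω t)) t) :
    ∀ t,
      HasDerivAt
        (fun s => (1 / 2) * (ω s ⬝ᵥ (Matrix.diagonal Md).mulVec (ω s))
          + W2 ep1 ep2 B Bii Xd Xd' Efd ηb Vb (η s) (V s)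
          + (1 / 2) * ((θ s - fun _ => (∑ j, Pl j) / (∑ j, (q j)⁻¹))
              ⬝ᵥ (θ s - fun _ => (∑ j, Pl j) / (∑ j, (q j)⁻¹))))
        (-(ω t ⬝ᵥ (Matrix.diagonal Ad).mulVec (ω t))
          - (((Emat ep1 ep2 B Bii Xd Xd' (η t)).mulVec (V t) - Efd) ⬝ᵥ
              (Matrix.diagonal fun i => (Td i)⁻¹).mulVec
                ((Emat ep1 ep2 B Bii Xd Xd' (η t)).mulVec (V t) - Efd))
          - ((θ t - fun _ => (∑ j, Pl j) / (∑ j, (q j)⁻¹))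
              ⬝ᵥ (G.lapMatrix ℝ).mulVec
                (θ t - fun _ => (∑ j, Pl j) / (∑ j, (q j)⁻¹)))) t ∧
      (-(ω t ⬝ᵥ (Matrix.diagonal Ad).mulVec (ω t))
          - (((Emat ep1 ep2 B Bii Xd Xd' (η t)).mulVec (V t) - Efd) ⬝ᵥ
              (Matrix.diagonal fun i => (Td i)⁻¹).mulVec
                ((Emat ep1 ep2 B Bii Xd Xd' (η t)).mulVec (V t) - Efd))
          - ((θ t - fun _ => (∑ j, Pl j) / (∑ j, (q j)⁻¹))
              ⬝ᵥ (G.lapMatrix ℝ).mulVec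
                (θ t - fun _ => (∑ j, Pl j) / (∑ j, (q j)⁻¹)))) ≤ 0 :=
  closed_loop_dissipation_general ep1 ep2 hep B Bii Xd Xd' Md Ad Td hA hT q G Efd Pl ηb Vb heq2 η ω
    ω' V V' θ hη hω hωdyn hV hVdyn hθ
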